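/- The number T_8 of directed paths of length 8 in the partition-move digraph from the empty partition back to the empty partition equals 107. (In the paper this is the number of topological equivalence classes of excellent Morse functions on the 2-sphere with 8 critical points.) -/

import Mathlib

/-- Adding one cell to the Young diagram of a partition, given as the multiset of its parts:
either append a new part equal to `1`, or increase one part by `1`. -/
def AddCell (s t : Multiset ℕ) : Prop :=
  t = 1 ::ₘ s ∨ ∃ h ∈ s, t = (h + 1) ::ₘ s.erase h

/-- The X-move on partitions: replace two parts `h₁, h₂ ≥ 2` by the single part
`h₁ + h₂ − 1`. -/
def XMove (s t : Multiset ℕ) : Prop :=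
  ∃ h₁ h₂, h₁ ∈ s ∧ h₂ ∈ s.erase h₁ ∧ 2 ≤ h₁ ∧ 2 ≤ h₂ ∧
    t = (h₁ + h₂ - 1) ::ₘ (s.erase h₁).erase h₂

/-- A move (directed edge) in the partition digraph: a U-move (add one cell), a D-move
(remove one cell, the inverse of a U-move) or an X-move, between partitions, i.e. multisets
of positive parts. -/
def PMove (s t : Multiset ℕ) : Prop :=
  0 ∉ s ∧ 0 ∉ t ∧ (AddCell s t ∨ AddCell t s ∨ XMove s t)

/-- `T L`: the number of directed paths of length `L` in the partition-move digraph from the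
empty partition back to the empty partition. -/
noncomputable def T (L : ℕ) : ℕ :=
  Nat.card {p : Fin (L + 1) → Multiset ℕ //
    p 0 = 0 ∧ p (Fin.last L) = 0 ∧ ∀ i : Fin L, PMove (p i.castSucc) (p i.succ)}

/-!
A closed walk of length `n + 1` splits into its first move and a walk of length `n`, so `T 8` is
given by the transfer-matrix recursion over the finitely many successors of each partition. Every
move changes the number of cells by at most one, so a partition with more than `n` cells cannot
return to `∅` in `n` moves; pruning those makes the recursion small enough to evaluate.
-/

namespace Relation

variable {α : Type*} (r : α → α → Prop)

def Walk (n : ℕ) (a b : α) : Type _ :=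
  {p : Fin (n + 1) → α // p 0 = a ∧ p (Fin.last n) = b ∧ ∀ i : Fin n, r (p i.castSucc) (p i.succ)}

variable {r}

namespace Walk

instance subsingleton_zero (a b : α) : Subsingleton (Walk r 0 a b) :=
  ⟨fun p q => Subtype.ext <| funext fun i => by
    rw [Fin.fin_one_eq_zero i, p.2.1, q.2.1]⟩

theorem nonempty_zero_iff {a b : α} : Nonempty (Walk r 0 a b) ↔ a = b :=
  ⟨fun ⟨p⟩ => p.2.1.symm.trans p.2.2.1, fun h => ⟨⟨fun _ => a, rfl, h, Fin.elim0⟩⟩⟩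

def succEquiv (n : ℕ) (a b : α) :
    Walk r (n + 1) a b ≃ Σ c : {c // r a c}, Walk r n c b where
  toFun p := ⟨⟨Fin.tail p.1 0, by simpa [Fin.tail, p.2.1] using p.2.2.2 0⟩,
    Fin.tail p.1, rfl, p.2.2.1, fun i => p.2.2.2 i.succ⟩
  invFun q := ⟨Fin.cons a q.2.1, rfl, q.2.2.2.1, Fin.cases (by simpa [q.2.2.1] using q.1.2)
    fun i => by simpa using q.2.2.2.2 i⟩
  left_inv p := Subtype.ext <| by
    conv_rhs => rw [← Fin.cons_self_tail p.1]
    rw [p.2.1]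
  right_inv q := Sigma.subtype_ext (Subtype.ext q.2.2.1) rfl

theorem height_le {h : α → ℕ} (hh : ∀ a c, r a c → h a ≤ h c + 1) :
    ∀ {n : ℕ} {a b : α}, Walk r n a b → h a ≤ h b + n
  | 0, _, _, p => (nonempty_zero_iff.1 ⟨p⟩ ▸ le_rfl)
  | n + 1, a, b, p => by
    obtain ⟨c, q⟩ := succEquiv n a b p
    have := height_le hh q
    have := hh a c c.2
    omega

variable {N : α → Finset α}

theorem finite (hN : ∀ a c, c ∈ N a ↔ r a c) : ∀ n a b, Finite (Walk r n a b)
  | 0, _, _ => inferInstance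
  | n + 1, a, b =>
    have : Finite {c // r a c} := (N a).finite_toSet.subset fun c hc => (hN a c).2 hc
    have := fun c : {c // r a c} => finite hN n c b
    .of_equiv _ (succEquiv n a b).symm

end Walk

variable [DecidableEq α]

/-- When `h` drops by at most one per step, the test on `h a` only cuts off vertices that cannot
reach `b` in time (`Walk.height_le`). -/
def walkCount (N : α → Finset α) (h : α → ℕ) (b : α) : ℕ → α → ℕ
  | 0, a => if a = b then 1 else 0
  | n + 1, a => if h a ≤ h b + n + 1 then ∑ c ∈ N a, walkCount N h b n c else 0

theorem Walk.card_eq_walkCount {N : α → Finset α} (hN : ∀ a c, c ∈ N a ↔ r a c) {h : α → ℕ}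
    (hh : ∀ a c, r a c → h a ≤ h c + 1) (b : α) :
    ∀ n a, Nat.card (Walk r n a b) = walkCount N h b n a
  | 0, a => by
    by_cases hab : a = b
    · have : Nonempty (Walk r 0 a b) := nonempty_zero_iff.2 hab
      rw [walkCount, if_pos hab, Nat.card_eq_one_iff_unique]
      exact ⟨inferInstance, this⟩
    · have : IsEmpty (Walk r 0 a b) := not_nonempty_iff.1 (mt nonempty_zero_iff.1 hab)
      simp [walkCount, hab]
  | n + 1, a => by
    rw [walkCount]
    split_ifs with hab
    · have := Fintype.subtype (N a) (hN a)
      have := fun c : {c // r a c} => finite hN n c b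
      rw [Nat.card_congr (succEquiv n a b), Nat.card_sigma, Finset.sum_subtype (N a) (hN a)]
      exact Finset.sum_congr rfl fun c _ => card_eq_walkCount hN hh b n c
    · have : IsEmpty (Walk r (n + 1) a b) := ⟨fun p => hab (height_le hh p)⟩
      exact Nat.card_of_isEmpty

end Relation

instance (s t : Multiset ℕ) : Decidable (AddCell s t) :=
  decidable_of_iff (t = 1 ::ₘ s ∨ ∃ h, ∃ _ : h ∈ s, t = (h + 1) ::ₘ s.erase h) (by simp [AddCell])

instance (s t : Multiset ℕ) : Decidable (XMove s t) :=
  decidable_of_iff (∃ h₁, ∃ _ : h₁ ∈ s, ∃ h₂, ∃ _ : h₂ ∈ s.erase h₁, 2 ≤ h₁ ∧ 2 ≤ h₂ ∧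
      t = (h₁ + h₂ - 1) ::ₘ (s.erase h₁).erase h₂) (by simp only [XMove, exists_prop]; aesop)

instance (s t : Multiset ℕ) : Decidable (PMove s t) := by
  unfold PMove; infer_instance

/-- A superset of the one-move successors of `s`, cut down by `pmoveNeighbors`. -/
def pmoveCandidates (s : Multiset ℕ) : Multiset (Multiset ℕ) :=
  (1 ::ₘ s) ::ₘ s.erase 1 ::ₘ
    ((s.map fun h => (h + 1) ::ₘ s.erase h) + (s.map fun h => (h - 1) ::ₘ s.erase h) +
      s.bind fun h₁ => (s.erase h₁).map fun h₂ => (h₁ + h₂ - 1) ::ₘ (s.erase h₁).erase h₂)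

theorem AddCell.mem_pmoveCandidates {s t : Multiset ℕ} (h : AddCell s t) :
    t ∈ pmoveCandidates s := by
  rcases h with rfl | ⟨a, ha, rfl⟩
  · simp [pmoveCandidates]
  · simp only [pmoveCandidates, Multiset.mem_cons, Multiset.mem_add, Multiset.mem_map]
    exact .inr <| .inr <| .inl <| .inl ⟨a, ha, rfl⟩

theorem AddCell.mem_pmoveCandidates_symm {s t : Multiset ℕ} (h : AddCell t s) :
    t ∈ pmoveCandidates s := by
  simp only [pmoveCandidates, Multiset.mem_cons, Multiset.mem_add, Multiset.mem_map]
  rcases h with rfl | ⟨a, ha, rfl⟩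
  · simp
  · refine .inr <| .inr <| .inl <| .inr ⟨a + 1, Multiset.mem_cons_self _ _, ?_⟩
    simp [Multiset.cons_erase ha]

theorem XMove.mem_pmoveCandidates {s t : Multiset ℕ} (h : XMove s t) :
    t ∈ pmoveCandidates s := by
  obtain ⟨h₁, h₂, m₁, m₂, -, -, rfl⟩ := h
  simp only [pmoveCandidates, Multiset.mem_cons, Multiset.mem_add, Multiset.mem_bind,
    Multiset.mem_map]
  exact .inr <| .inr <| .inr ⟨h₁, m₁, h₂, m₂, rfl⟩

def pmoveNeighbors (s : Multiset ℕ) : Finset (Multiset ℕ) :=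
  (pmoveCandidates s).toFinset.filter (PMove s)

theorem mem_pmoveNeighbors {s t : Multiset ℕ} : t ∈ pmoveNeighbors s ↔ PMove s t := by
  refine ⟨fun h => (Finset.mem_filter.1 h).2, fun h => Finset.mem_filter.2 ⟨?_, h⟩⟩
  rw [Multiset.mem_toFinset]
  obtain ⟨-, -, h | h | h⟩ := h
  exacts [h.mem_pmoveCandidates, h.mem_pmoveCandidates_symm, h.mem_pmoveCandidates]

theorem AddCell.sum_eq {s t : Multiset ℕ} (h : AddCell s t) : t.sum = s.sum + 1 := by
  rcases h with rfl | ⟨a, ha, rfl⟩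
  · rw [Multiset.sum_cons, add_comm]
  · rw [Multiset.sum_cons, ← Multiset.sum_erase ha]
    omega

theorem XMove.sum_eq {s t : Multiset ℕ} (h : XMove s t) : s.sum = t.sum + 1 := by
  obtain ⟨h₁, h₂, m₁, m₂, h₁_two, -, rfl⟩ := h
  rw [Multiset.sum_cons, ← Multiset.sum_erase m₁, ← Multiset.sum_erase m₂]
  omega

theorem PMove.sum_le {s t : Multiset ℕ} (h : PMove s t) : s.sum ≤ t.sum + 1 := by
  obtain ⟨-, -, h | h | h⟩ := h <;> have := h.sum_eq <;> omega

/-- There are exactly `107` closed directed paths of length `8` at the empty partition in the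
partition-move digraph (the number of topological equivalence classes of excellent Morse
functions on `S²` with `8` critical points). -/
theorem T_eight : T 8 = 107 := by
  rw [show T 8 = Nat.card (Relation.Walk PMove 8 0 0) from rfl,
    Relation.Walk.card_eq_walkCount (fun _ _ => mem_pmoveNeighbors) (fun _ _ => PMove.sum_le)]
  decide
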